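/- If H = ⊕_{n≥0} H_n is a graded bialgebra over a field k (graded as both algebra and coalgebra) whose degree-zero component H_0 is a Hopf algebra with invertible antipode, then H is a Hopf algebra with invertible antipode. -/

import Mathlib

/-!
STATEMENT 10.  If `H = ⊕ₙ Hₙ` is a graded bialgebra over a field `k` (graded as algebra
and as coalgebra) whose degree-zero component `H₀` is a Hopf algebra with invertible
antipode, then `H` is a Hopf algebra with invertible antipode.
-/

open TensorProduct

noncomputable section

namespace LQTPaper

variable (k : Type*) [Field k]

def tsub {H H' : Type*} [AddCommGroup H] [Module k H] [AddCommGroup H'] [Module k H']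
    (U : Submodule k H) (V : Submodule k H') : Submodule k (H ⊗[k] H') :=
  LinearMap.range (TensorProduct.map U.subtype V.subtype)

/-- A graded bialgebra structure:  a grading making `H` simultaneously a graded algebra
and a graded coalgebra. -/
structure BialgGrading (H : Type*) [Ring H] [Bialgebra k H] where
  grade : ℕ → Submodule k H
  internal : DirectSum.IsInternal grade
  one_mem : (1 : H) ∈ grade 0
  mul_mem : ∀ i j, ∀ x ∈ grade i, ∀ y ∈ grade j, x * y ∈ grade (i + j)
  comul_mem : ∀ n, ∀ x ∈ grade n,
    Coalgebra.comul (R := k) x ∈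
      ⨆ p : {p : ℕ × ℕ // p.1 + p.2 = n}, tsub k (grade p.1.1) (grade p.1.2)
  counit_zero : ∀ n, 0 < n → ∀ x ∈ grade n, Coalgebra.counit (R := k) x = 0

variable {H : Type*} [Ring H] [Bialgebra k H]

/-- `s` is an antipode for the elements of `X`:  `Σ s(x₁)x₂ = ε(x)1 = Σ x₁s(x₂)`
for `x ∈ X`. -/
def IsAntipodeOn (s : H →ₗ[k] H) (X : Submodule k H) : Prop :=
  ∀ x ∈ X,
    (LinearMap.mul' k H) ((TensorProduct.map s LinearMap.id) (Coalgebra.comul (R := k) x))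
      = Coalgebra.counit (R := k) x • (1 : H) ∧
    (LinearMap.mul' k H) ((TensorProduct.map LinearMap.id s) (Coalgebra.comul (R := k) x))
      = Coalgebra.counit (R := k) x • (1 : H)

/-!
Convolution of maps `H → A` only involves finitely many graded pieces at a time, and a map `N`
vanishing on `H₀` is locally nilpotent: `N ^ (n + 1)` kills `H_n`. So `1 + N` is invertible,
with the geometric series truncated at degree `n` on `H_n` as inverse, and a map `f : H → A` is
convolution-invertible as soon as `f ∘ π₀` is, where `π₀` is the projection onto `H₀`.
For `id : H → H`, with degree-zero inverse `s ∘ π₀`, this gives an antipode `S` of `H`. It agrees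
with `s` on `H₀`, so `s` is anti-multiplicative there, which makes `s' ∘ π₀` a degree-zero
inverse of `op : H → Hᵐᵒᵖ`. The resulting inverse `T` of `op` is multiplicative, as is the
convolution inverse of any anti-multiplicative map, and composing `S * id = 1` and `T * op = 1`
with the algebra maps `T` and `S ∘ unop` shows that `unop ∘ T` is inverse to `S`.
-/

open Coalgebra WithConv

section ConvolutionInverse

variable {R C A : Type*} [CommSemiring R] [Semiring A] [Algebra R A]

theorem algHom_comp_convMul_comp_eq_one [AddCommMonoid C] [Module R C] [Coalgebra R C]
    {B : Type*} [Semiring B] [Algebra R B] (h : A →ₐ[R] B)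
    {f g : WithConv (C →ₗ[R] A)} (hfg : f * g = 1) :
    toConv (h.toLinearMap ∘ₗ f.ofConv) * toConv (h.toLinearMap ∘ₗ g.ofConv) = 1 := by
  rw [← toConv_ofConv (_ * _), ← LinearMap.algHom_comp_convMul_distrib, hfg]
  ext; simp

variable [Semiring C] [Bialgebra R C]

theorem convInverse_map_one {φ ψ : C →ₗ[R] A} (hφ : φ 1 = 1)
    (hψφ : toConv ψ * toConv φ = 1) : ψ 1 = 1 := by
  simpa [Algebra.TensorProduct.one_def, hφ] using congr($hψφ 1)

open LinearMap in
theorem convInverse_map_mul_of_map_mul_antidistrib {φ ψ : C →ₗ[R] A}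
    (hφ : ∀ a b, φ (a * b) = φ b * φ a)
    (hψφ : toConv ψ * toConv φ = 1) (hφψ : toConv φ * toConv ψ = 1) (a b : C) :
    ψ (a * b) = ψ a * ψ b := by
  -- both `ψ ∘ mul` and `mul ∘ (ψ ⊗ ψ)` are convolution inverses of `φ ∘ mul` on `C ⊗ C`
  have hleft : toConv (ψ ∘ₗ mul' R C) * toConv (φ ∘ₗ mul' R C) = 1 := by
    have h : (toConv ψ * toConv φ).ofConv ∘ₗ mul' R C =
        (toConv (ψ ∘ₗ mul' R C) * toConv (φ ∘ₗ mul' R C)).ofConv :=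
      convMul_comp_coalgHom_distrib (toConv ψ) (toConv φ) (Bialgebra.mulCoalgHom R C)
    rw [hψφ] at h
    rw [← toConv_ofConv (_ * _), ← h]
    ext x y
    simp [Bialgebra.counit_mul, mul_comm]
  have hsum (c : C) : ∑ i ∈ (ℛ R c).index, φ ((ℛ R c).left i) * ψ ((ℛ R c).right i) =
      algebraMap R A (counit c) := by
    rw [← (ℛ R c).convMul_apply, hφψ, convOne_apply]
  have hright : toConv (φ ∘ₗ mul' R C) * toConv (mul' R A ∘ₗ TensorProduct.map ψ ψ) = 1 := by
    refine WithConv.ext (TensorProduct.ext' fun a b => ?_)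
    rw [((ℛ R a).tmul (ℛ R b)).convMul_apply]
    simp only [Coalgebra.Repr.tmul_left, Coalgebra.Repr.tmul_right, Coalgebra.Repr.tmul_index,
      coe_comp, Function.comp_apply, mul'_apply, TensorProduct.map_tmul, hφ,
      Finset.sum_product_right]
    calc _ = ∑ j ∈ (ℛ R b).index, φ ((ℛ R b).left j) *
          (∑ i ∈ (ℛ R a).index, φ ((ℛ R a).left i) * ψ ((ℛ R a).right i)) *
            ψ ((ℛ R b).right j) := by
          simp only [Finset.mul_sum, Finset.sum_mul, mul_assoc]
      _ = ∑ j ∈ (ℛ R b).index,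
          algebraMap R A (counit a) * (φ ((ℛ R b).left j) * ψ ((ℛ R b).right j)) :=
          Finset.sum_congr rfl fun j _ => by rw [hsum, ← Algebra.commutes, mul_assoc]
      _ = _ := by
          rw [← Finset.mul_sum, hsum, convOne_apply, TensorProduct.counit_tmul, smul_eq_mul,
            mul_comm (counit b), map_mul]
  exact congr($(left_inv_eq_right_inv hleft hright) (a ⊗ₜ b))

abbrev hopfAlgebraOfConvInverse (S : C →ₗ[R] C) (h₁ : toConv S * toConv LinearMap.id = 1)
    (h₂ : toConv LinearMap.id * toConv S = 1) : HopfAlgebra R C :=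
  { ‹Bialgebra R C› with
    antipode := S
    mul_antipode_rTensor_comul := by
      rw [LinearMap.rTensor_def]
      simpa [LinearMap.convMul_def, LinearMap.convOne_def] using congrArg ofConv h₁
    mul_antipode_lTensor_comul := by
      rw [LinearMap.lTensor_def]
      simpa [LinearMap.convMul_def, LinearMap.convOne_def] using congrArg ofConv h₂ }

end ConvolutionInverse

section Hopf

variable {R C : Type*} [CommSemiring R] [Semiring C] [HopfAlgebra R C]

open HopfAlgebra MulOpposite

theorem antipode_inverse_of_convInverse_op {T : C →ₗ[R] Cᵐᵒᵖ}
    (hT : toConv T * toConv (opLinearEquiv R).toLinearMap = 1)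
    (hT' : toConv (opLinearEquiv R).toLinearMap * toConv T = 1) :
    (∀ x, (T (antipode R x)).unop = x) ∧ ∀ x, antipode R (T x).unop = x := by
  let τ : C →ₐ[R] Cᵐᵒᵖ := .ofLinearMap T (convInverse_map_one (by simp) hT)
    (convInverse_map_mul_of_map_mul_antidistrib (fun _ _ => by simp) hT hT')
  let σ : Cᵐᵒᵖ →ₐ[R] C := .ofLinearMap (antipode R ∘ₗ (opLinearEquiv R).symm.toLinearMap)
    (by simp) (fun _ _ => by simp [antipode_mul_antidistrib])
  have hTS : toConv (τ.toLinearMap ∘ₗ antipode R) = toConv (opLinearEquiv R).toLinearMap :=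
    left_inv_eq_right_inv (algHom_comp_convMul_comp_eq_one τ LinearMap.antipode_mul_id) hT
  have hST : toConv (σ.toLinearMap ∘ₗ T) = toConv LinearMap.id :=
    left_inv_eq_right_inv (algHom_comp_convMul_comp_eq_one σ hT) LinearMap.antipode_mul_id
  exact ⟨fun x => congr(($hTS x).unop), fun x => congr($hST x)⟩

end Hopf

theorem isAntipodeOn_antipode {C : Type*} [Ring C] [HopfAlgebra k C] :
    IsAntipodeOn k (HopfAlgebra.antipode k : C →ₗ[k] C) ⊤ := fun x _ =>
  ⟨by rw [← Algebra.algebraMap_eq_smul_one]; exact HopfAlgebra.mul_antipode_rTensor_comul_apply x,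
    by rw [← Algebra.algebraMap_eq_smul_one]; exact HopfAlgebra.mul_antipode_lTensor_comul_apply x⟩

namespace BialgGrading

variable {k} (G : BialgGrading k H)

instance : DirectSum.Decomposition G.grade := G.internal.chooseDecomposition

def glue {M : Type*} [AddCommMonoid M] [Module k M] (F : ℕ → H →ₗ[k] M) : H →ₗ[k] M :=
  DirectSum.toModule k ℕ M (fun n => F n ∘ₗ (G.grade n).subtype) ∘ₗ
    (DirectSum.decomposeLinearEquiv G.grade).toLinearMap

theorem glue_apply_of_mem {M : Type*} [AddCommMonoid M] [Module k M] (F : ℕ → H →ₗ[k] M)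
    {n : ℕ} {x : H} (hx : x ∈ G.grade n) : G.glue F x = F n x := by
  simp [glue, DirectSum.decomposeLinearEquiv_apply, DirectSum.decompose_of_mem _ hx,
    ← DirectSum.lof_eq_of k, DirectSum.toModule_lof]

def projZero : H →ₗ[k] H := G.glue (Pi.single 0 LinearMap.id)

theorem projZero_apply_of_mem_zero {x : H} (hx : x ∈ G.grade 0) : G.projZero x = x := by
  simp [projZero, G.glue_apply_of_mem _ hx]

theorem projZero_apply_of_mem {n : ℕ} (hn : n ≠ 0) {x : H} (hx : x ∈ G.grade n) :
    G.projZero x = 0 := by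
  simp [projZero, G.glue_apply_of_mem _ hx, hn]

theorem linearMap_ext {M : Type*} [AddCommMonoid M] [Module k M] {f g : H →ₗ[k] M}
    (h : ∀ n, ∀ x ∈ G.grade n, f x = g x) : f = g :=
  DirectSum.decompose_lhom_ext G.grade fun n => LinearMap.ext fun x => h n x x.2

theorem map_comul_mem {M : Type*} [AddCommMonoid M] [Module k M] (φ : H ⊗[k] H →ₗ[k] M)
    (P : Submodule k M) {n : ℕ} {x : H} (hx : x ∈ G.grade n)
    (h : ∀ p q, p + q = n → ∀ a ∈ G.grade p, ∀ b ∈ G.grade q, φ (a ⊗ₜ b) ∈ P) :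
    φ (comul x) ∈ P := by
  refine (iSup_le fun (⟨(p, q), hpq⟩ : {p : ℕ × ℕ // p.1 + p.2 = n}) => ?_ :
    _ ≤ P.comap φ) (G.comul_mem n x hx)
  rintro _ ⟨w, rfl⟩
  induction w using TensorProduct.induction_on with
  | zero => simp
  | tmul a b => exact h p q hpq a a.2 b b.2
  | add v w hv hw => rw [map_add]; exact add_mem hv hw

theorem map_comul_mem_of_mem_zero {M : Type*} [AddCommMonoid M] [Module k M]
    (φ : H ⊗[k] H →ₗ[k] M) (P : Submodule k M) {x : H} (hx : x ∈ G.grade 0)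
    (h : ∀ a ∈ G.grade 0, ∀ b ∈ G.grade 0, φ (a ⊗ₜ b) ∈ P) : φ (comul x) ∈ P :=
  G.map_comul_mem φ P hx fun p q hpq => by
    obtain ⟨rfl, rfl⟩ : p = 0 ∧ q = 0 := by omega
    exact h

section Convolution

variable {A : Type*} [Ring A] [Algebra k A]

theorem conv_ext {f g : WithConv (H →ₗ[k] A)} (h : ∀ n, ∀ x ∈ G.grade n, f x = g x) : f = g :=
  WithConv.ext (G.linearMap_ext h)

theorem convMul_apply_eq_zero {f g : WithConv (H →ₗ[k] A)} {n : ℕ} {x : H}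
    (hx : x ∈ G.grade n)
    (h : ∀ p q, p + q = n → (∀ a ∈ G.grade p, f a = 0) ∨ ∀ b ∈ G.grade q, g b = 0) :
    (f * g) x = 0 := by
  rw [LinearMap.convMul_apply, ← Submodule.mem_bot k (M := A)]
  refine G.map_comul_mem (LinearMap.mul' k A ∘ₗ map f.ofConv g.ofConv) ⊥ hx
    fun p q hpq a ha b hb => ?_
  rcases h p q hpq with h | h <;> simp [h, ha, hb]

theorem convMul_apply_congr {f f' g g' : WithConv (H →ₗ[k] A)} {n : ℕ} {x : H}
    (hx : x ∈ G.grade n) (hf : ∀ p ≤ n, ∀ a ∈ G.grade p, f a = f' a)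
    (hg : ∀ q ≤ n, ∀ b ∈ G.grade q, g b = g' b) :
    (f * g) x = (f' * g') x := by
  have h : f * g - f' * g' = (f - f') * g + f' * (g - g') := by noncomm_ring
  have h₁ : ((f - f') * g) x = 0 := G.convMul_apply_eq_zero hx fun p q hpq =>
    .inl fun a ha => by simp [hf p (by omega) a ha]
  have h₂ : (f' * (g - g')) x = 0 := G.convMul_apply_eq_zero hx fun p q hpq =>
    .inr fun b hb => by simp [hg q (by omega) b hb]
  have := congr($h x)
  simp only [ofConv_sub, ofConv_add, LinearMap.sub_apply, LinearMap.add_apply, h₁, h₂] at this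
  exact sub_eq_zero.1 (by simpa using this)

theorem pow_apply_eq_zero {N : WithConv (H →ₗ[k] A)} (hN : ∀ x ∈ G.grade 0, N x = 0)
    {n j : ℕ} (hnj : n < j) {x : H} (hx : x ∈ G.grade n) : (N ^ j) x = 0 := by
  induction j generalizing n x with
  | zero => omega
  | succ j ih =>
    rw [pow_succ']
    refine G.convMul_apply_eq_zero hx fun p q hpq => ?_
    rcases Nat.eq_zero_or_pos p with rfl | hp
    · exact .inl hN
    · exact .inr fun b hb => ih (by omega) hb

def oneAddInv (N : WithConv (H →ₗ[k] A)) : WithConv (H →ₗ[k] A) :=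
  toConv (G.glue fun n => (∑ j ∈ Finset.range (n + 1), (-N) ^ j).ofConv)

theorem oneAddInv_apply_of_mem {N : WithConv (H →ₗ[k] A)} (hN : ∀ x ∈ G.grade 0, N x = 0)
    {p n : ℕ} (hpn : p ≤ n) {x : H} (hx : x ∈ G.grade p) :
    G.oneAddInv N x = (∑ j ∈ Finset.range (n + 1), (-N) ^ j) x := by
  have hN' : ∀ x ∈ G.grade 0, (-N) x = 0 := fun x hx => by simp [hN x hx]
  simp only [oneAddInv, ofConv_toConv, G.glue_apply_of_mem _ hx, ofConv_sum,
    LinearMap.sum_apply]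
  refine Finset.sum_subset (Finset.range_subset_range.2 (by omega)) fun j _ hj => ?_
  exact G.pow_apply_eq_zero hN' (by simpa using hj) hx

theorem isUnit_one_add {N : WithConv (H →ₗ[k] A)} (hN : ∀ x ∈ G.grade 0, N x = 0) :
    IsUnit (1 + N) := by
  have hpow : ∀ n, ∀ x ∈ G.grade n, ((-N) ^ (n + 1)) x = 0 := fun n x hx =>
    G.pow_apply_eq_zero (fun x hx => by simp [hN x hx]) n.lt_succ_self hx
  refine isUnit_iff_exists.2 ⟨G.oneAddInv N, G.conv_ext fun n x hx => ?_,
    G.conv_ext fun n x hx => ?_⟩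
  · rw [G.convMul_apply_congr hx (fun _ _ _ _ => rfl)
      (fun p hp b hb => G.oneAddInv_apply_of_mem hN hp hb)]
    have h := mul_neg_geom_sum (-N) (n + 1)
    rw [sub_neg_eq_add] at h
    simp [h, hpow n x hx]
  · rw [G.convMul_apply_congr hx (fun p hp a ha => G.oneAddInv_apply_of_mem hN hp ha)
      (fun _ _ _ _ => rfl)]
    have h := geom_sum_mul_neg (-N) (n + 1)
    rw [sub_neg_eq_add] at h
    simp [h, hpow n x hx]

theorem isUnit_of_isUnit_comp_projZero {f : WithConv (H →ₗ[k] A)}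
    (hf : IsUnit (toConv (f.ofConv ∘ₗ G.projZero))) : IsUnit f := by
  obtain ⟨u, hu⟩ := hf
  have hpos : ∀ x ∈ G.grade 0, (f - toConv (f.ofConv ∘ₗ G.projZero)) x = 0 := fun x hx => by
    simp [G.projZero_apply_of_mem_zero hx]
  have h : ↑u⁻¹ * f = 1 + ↑u⁻¹ * (f - toConv (f.ofConv ∘ₗ G.projZero)) := by
    rw [mul_sub, ← hu, Units.inv_mul]; abel
  rw [← Units.isUnit_units_mul u⁻¹, h]
  exact G.isUnit_one_add fun x hx => G.convMul_apply_eq_zero hx fun p q hpq =>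
    .inr fun b hb => hpos b (by rwa [show q = 0 by omega] at hb)

theorem comp_projZero_convMul_comp_projZero_eq_one {f g : H →ₗ[k] A}
    (h : ∀ x ∈ G.grade 0, (toConv f * toConv g) x = algebraMap k A (counit x)) :
    toConv (f ∘ₗ G.projZero) * toConv (g ∘ₗ G.projZero) = 1 := by
  refine G.conv_ext fun n x hx => ?_
  rcases n with _ | n
  · rw [G.convMul_apply_congr hx (f' := toConv f) (g' := toConv g)
      (fun p hp a ha => by simp [G.projZero_apply_of_mem_zero (show p = 0 by omega ▸ ha)])
      (fun q hq b hb => by simp [G.projZero_apply_of_mem_zero (show q = 0 by omega ▸ hb)])]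
    exact h x hx
  · rw [LinearMap.convOne_apply, G.counit_zero (n + 1) n.succ_pos x hx, map_zero]
    refine G.convMul_apply_eq_zero hx fun p q hpq => ?_
    rcases Nat.eq_zero_or_pos p with rfl | hp
    · exact .inr fun b hb => by simp [G.projZero_apply_of_mem (by omega) hb]
    · exact .inl fun a ha => by simp [G.projZero_apply_of_mem (by omega) ha]

theorem isUnit_of_convMul_eq_on_grade_zero {f g : H →ₗ[k] A}
    (hgf : ∀ x ∈ G.grade 0, (toConv g * toConv f) x = algebraMap k A (counit x))
    (hfg : ∀ x ∈ G.grade 0, (toConv f * toConv g) x = algebraMap k A (counit x)) :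
    IsUnit (toConv f) :=
  G.isUnit_of_isUnit_comp_projZero <| isUnit_iff_exists.2
    ⟨_, G.comp_projZero_convMul_comp_projZero_eq_one hfg,
      G.comp_projZero_convMul_comp_projZero_eq_one hgf⟩

end Convolution

theorem isUnit_toConv_id {s : H →ₗ[k] H} (hanti : IsAntipodeOn k s (G.grade 0)) :
    IsUnit (toConv (LinearMap.id : H →ₗ[k] H)) :=
  G.isUnit_of_convMul_eq_on_grade_zero (g := s)
    (fun x hx => by simpa [Algebra.algebraMap_eq_smul_one] using (hanti x hx).1)
    (fun x hx => by simpa [Algebra.algebraMap_eq_smul_one] using (hanti x hx).2)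

theorem eqOn_grade_zero_of_convMul_id_eq_one {S s : H →ₗ[k] H}
    (hanti : IsAntipodeOn k s (G.grade 0)) (hS : toConv S * toConv LinearMap.id = 1) :
    Set.EqOn S s (G.grade 0) := fun x hx => by
  have hπσ : toConv G.projZero * toConv (s ∘ₗ G.projZero) = 1 := by
    simpa using G.comp_projZero_convMul_comp_projZero_eq_one (f := LinearMap.id) (g := s)
      fun x hx => by simpa [Algebra.algebraMap_eq_smul_one] using (hanti x hx).2
  have hSπ : ∀ p ≤ 0, ∀ a ∈ G.grade p,
      (toConv S * toConv G.projZero) a = (1 : WithConv (H →ₗ[k] H)) a := fun p hp a ha => by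
    obtain rfl : p = 0 := by omega
    rw [G.convMul_apply_congr ha (fun _ _ _ _ => rfl) (g := toConv G.projZero)
      (g' := toConv LinearMap.id)
      (fun q hq b hb => G.projZero_apply_of_mem_zero (show q = 0 by omega ▸ hb)), hS]
  calc S x = (toConv S * (toConv G.projZero * toConv (s ∘ₗ G.projZero))) x := by
        rw [hπσ, mul_one]
    _ = (1 * toConv (s ∘ₗ G.projZero)) x := by
        rw [← mul_assoc]; exact G.convMul_apply_congr hx hSπ fun _ _ _ _ => rfl
    _ = s x := by simp [G.projZero_apply_of_mem_zero hx]

-- `s` is injective on `H₀`, so an identity between elements of `H₀` can be checked after `s`.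
theorem map_comul_eq_counit_smul_one {s s' : H →ₗ[k] H} (hinv : ∀ x ∈ G.grade 0, s' (s x) = x)
    (hs'1 : s' 1 = 1) {φ ψ : H ⊗[k] H →ₗ[k] H}
    (hmem : ∀ a ∈ G.grade 0, ∀ b ∈ G.grade 0, φ (a ⊗ₜ b) ∈ G.grade 0)
    (hs : ∀ a ∈ G.grade 0, ∀ b ∈ G.grade 0, s (φ (a ⊗ₜ b)) = ψ (a ⊗ₜ b))
    {x : H} (hx : x ∈ G.grade 0) (hψ : ψ (comul x) = counit (R := k) x • (1 : H)) :
    φ (comul x) = counit (R := k) x • (1 : H) := by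
  have h₀ : φ (comul x) ∈ G.grade 0 := G.map_comul_mem_of_mem_zero φ _ hx hmem
  have hsφ : s (φ (comul x)) = ψ (comul x) := by
    rw [← sub_eq_zero, ← Submodule.mem_bot k (M := H)]
    exact G.map_comul_mem_of_mem_zero (s ∘ₗ φ - ψ) ⊥ hx fun a ha b hb => by simp [hs a ha b hb]
  rw [← hinv _ h₀, hsφ, hψ, map_smul, hs'1]

open MulOpposite in
theorem isUnit_toConv_op {s s' : H →ₗ[k] H} (hs'0 : ∀ x ∈ G.grade 0, s' x ∈ G.grade 0)
    (hanti : IsAntipodeOn k s (G.grade 0)) (hinv : ∀ x ∈ G.grade 0, s' (s x) = x ∧ s (s' x) = x)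
    (hs'1 : s' 1 = 1) (hmul : ∀ a ∈ G.grade 0, ∀ b ∈ G.grade 0, s (a * b) = s b * s a) :
    IsUnit (toConv (opLinearEquiv k : H ≃ₗ[k] Hᵐᵒᵖ).toLinearMap) := by
  let op : H ≃ₗ[k] Hᵐᵒᵖ := opLinearEquiv k
  refine G.isUnit_of_convMul_eq_on_grade_zero (g := op.toLinearMap ∘ₗ s')
    (fun x hx => op.symm.injective ?_) (fun x hx => op.symm.injective ?_)
  -- `φ (a ⊗ b) = b * s' a`, and `s (b * s' a) = a * s b`
  · have := G.map_comul_eq_counit_smul_one (fun x hx => (hinv x hx).1) hs'1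
      (φ := op.symm.toLinearMap ∘ₗ LinearMap.mul' k Hᵐᵒᵖ ∘ₗ map (op.toLinearMap ∘ₗ s') op)
      (ψ := LinearMap.mul' k H ∘ₗ map LinearMap.id s)
      (fun a ha b hb => by simpa [op] using G.mul_mem 0 0 b hb _ (hs'0 a ha))
      (fun a ha b hb => by simp [op, hmul b hb _ (hs'0 a ha), (hinv a ha).2]) hx (hanti x hx).2
    simpa [op, Algebra.algebraMap_eq_smul_one] using this
  -- `φ (a ⊗ b) = s' b * a`, and `s (s' b * a) = s a * b`
  · have := G.map_comul_eq_counit_smul_one (fun x hx => (hinv x hx).1) hs'1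
      (φ := op.symm.toLinearMap ∘ₗ LinearMap.mul' k Hᵐᵒᵖ ∘ₗ map op (op.toLinearMap ∘ₗ s'))
      (ψ := LinearMap.mul' k H ∘ₗ map s LinearMap.id)
      (fun a ha b hb => by simpa [op] using G.mul_mem 0 0 _ (hs'0 b hb) a ha)
      (fun a ha b hb => by simp [op, hmul _ (hs'0 b hb) a ha, (hinv b hb).2]) hx (hanti x hx).1
    simpa [op, Algebra.algebraMap_eq_smul_one] using this

end BialgGrading

theorem graded_bialgebra_invertible_antipode (G : BialgGrading k H)
    (s s' : H →ₗ[k] H)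
    (hs'0 : ∀ x ∈ G.grade 0, s' x ∈ G.grade 0)
    (hanti : IsAntipodeOn k s (G.grade 0))
    (hinv : ∀ x ∈ G.grade 0, s' (s x) = x ∧ s (s' x) = x) :
    ∃ S S' : H →ₗ[k] H,
      IsAntipodeOn k S ⊤ ∧ (∀ x : H, S' (S x) = x) ∧ (∀ x : H, S (S' x) = x) := by
  obtain ⟨⟨S⟩, hidS, hSid⟩ := isUnit_iff_exists.1 (G.isUnit_toConv_id hanti)
  let _ := hopfAlgebraOfConvInverse S hSid hidS
  have hSs := G.eqOn_grade_zero_of_convMul_id_eq_one hanti hSid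
  have hmul : ∀ a ∈ G.grade 0, ∀ b ∈ G.grade 0, s (a * b) = s b * s a := fun a ha b hb => by
    rw [← hSs (by simpa using G.mul_mem 0 0 a ha b hb), ← hSs ha, ← hSs hb]
    exact HopfAlgebra.antipode_mul_antidistrib a b
  have hs'1 : s' 1 = 1 := by
    have h := (hinv 1 G.one_mem).1
    rwa [← hSs G.one_mem, show S 1 = 1 from HopfAlgebra.antipode_one] at h
  obtain ⟨⟨T⟩, hopT, hTop⟩ := isUnit_iff_exists.1 (G.isUnit_toConv_op hs'0 hanti hinv hs'1 hmul)
  obtain ⟨hTS, hST⟩ := antipode_inverse_of_convInverse_op hTop hopT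
  exact ⟨S, (MulOpposite.opLinearEquiv k).symm.toLinearMap ∘ₗ T, isAntipodeOn_antipode k, hTS, hST⟩

end LQTPaper
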